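/- arXiv:1612.07386 — 2 statements merged into one kernel-verified Lean document; each statement's English description precedes it below -/
import Mathlib

section
/- Conversely, if the quadratic function f(x) = xᵀ A x + 2 bᵀ x (with A real symmetric) attains a minimum over ℝ^p, then A is positive semidefinite and (I - A A⁺) b = 0. -/
/-!
At a minimiser `x₀` of `f`, `f (x₀ + v) = f x₀ + 2 vᵀ(A x₀ + b) + vᵀ A v`. Moving along the
gradient direction `g = A x₀ + b` the first-order term `2 t ‖g‖²` must vanish, so `b = -A x₀`;
then `vᵀ A v ≥ 0` for every `v`, and `b` lies in the range of `A`, which `A A⁺` fixes.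
-/

open Matrix

/-- The four Penrose conditions characterizing the Moore–Penrose pseudoinverse. -/
def IsMoorePenrose {m n : ℕ} (A : Matrix (Fin m) (Fin n) ℝ)
    (Ap : Matrix (Fin n) (Fin m) ℝ) : Prop :=
  A * Ap * A = A ∧ Ap * A * Ap = Ap ∧ (A * Ap)ᵀ = A * Ap ∧ (Ap * A)ᵀ = Ap * A

theorem IsMoorePenrose.one_sub_mul_mul_eq_zero {m n : ℕ} {A : Matrix (Fin m) (Fin n) ℝ}
    {Ap : Matrix (Fin n) (Fin m) ℝ} (h : IsMoorePenrose A Ap) : (1 - A * Ap) * A = 0 := by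
  obtain ⟨hAApA, -⟩ := h
  rw [Matrix.sub_mul, Matrix.one_mul, hAApA, sub_self]

theorem eq_zero_of_forall_mul_add_sq_mul_nonneg {L c : ℝ} (h : ∀ t : ℝ, 0 ≤ t * L + t ^ 2 * c) :
    L = 0 := by
  have hmin : IsLocalMin (fun t : ℝ => t * L + t ^ 2 * c) 0 :=
    Filter.Eventually.of_forall fun t => by simpa using h t
  have hderiv : HasDerivAt (fun t : ℝ => t * L + t ^ 2 * c) L 0 := by
    have := ((hasDerivAt_id' (x := (0 : ℝ))).mul_const L).add ((hasDerivAt_pow 2 0).mul_const c)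
    simp only [one_mul, Nat.cast_ofNat, Nat.add_one_sub_one, pow_one, mul_zero, zero_mul,
      add_zero] at this
    exact this
  exact hmin.hasDerivAt_eq_zero hderiv

section Quadratic

variable {n : Type*} [Fintype n] {A : Matrix n n ℝ} {b : n → ℝ}

def quadratic (A : Matrix n n ℝ) (b x : n → ℝ) : ℝ := x ⬝ᵥ A *ᵥ x + 2 * (b ⬝ᵥ x)

theorem quadratic_add (hA : A.IsSymm) (x v : n → ℝ) :
    quadratic A b (x + v) = quadratic A b x + 2 * (v ⬝ᵥ (A *ᵥ x + b)) + v ⬝ᵥ A *ᵥ v := by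
  have hsymm : x ⬝ᵥ A *ᵥ v = v ⬝ᵥ A *ᵥ x := by
    rw [dotProduct_mulVec, ← mulVec_transpose, hA.eq, dotProduct_comm]
  simp only [quadratic, mulVec_add, dotProduct_add, add_dotProduct, hsymm, dotProduct_comm b]
  ring

theorem mulVec_add_eq_zero_of_forall_quadratic_le (hA : A.IsSymm) {x : n → ℝ}
    (hx : ∀ y, quadratic A b x ≤ quadratic A b y) : A *ᵥ x + b = 0 := by
  set g := A *ᵥ x + b
  have hgg : 2 * (g ⬝ᵥ g) = 0 := by
    refine eq_zero_of_forall_mul_add_sq_mul_nonneg (c := g ⬝ᵥ A *ᵥ g) fun t => ?_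
    have := hx (x + t • g)
    rw [quadratic_add hA] at this
    simp only [smul_dotProduct, mulVec_smul, dotProduct_smul, smul_eq_mul] at this
    linarith
  exact dotProduct_self_eq_zero.mp (by linarith)

theorem posSemidef_of_forall_quadratic_le (hA : A.IsSymm) {x : n → ℝ}
    (hx : ∀ y, quadratic A b x ≤ quadratic A b y) : A.PosSemidef := by
  refine .of_dotProduct_mulVec_nonneg (isHermitian_iff_isSymm.mpr hA) fun v => ?_
  have := hx (x + v)
  rw [quadratic_add hA, mulVec_add_eq_zero_of_forall_quadratic_le hA hx, dotProduct_zero] at this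
  simpa using this

end Quadratic

/-- If the quadratic function `f(x) = xᵀ A x + 2 bᵀ x` (with `A` real symmetric) attains a
minimum over `ℝ^p`, then `A` is positive semidefinite and `(I - A A⁺) b = 0`. -/
theorem quadratic_min_necessary {p : ℕ} (A Ap : Matrix (Fin p) (Fin p) ℝ) (b : Fin p → ℝ)
    (hA : A.IsSymm) (hMP : IsMoorePenrose A Ap)
    (hmin : ∃ x₀ : Fin p → ℝ, ∀ x : Fin p → ℝ,
      x₀ ⬝ᵥ (A *ᵥ x₀) + 2 * (b ⬝ᵥ x₀) ≤ x ⬝ᵥ (A *ᵥ x) + 2 * (b ⬝ᵥ x)) :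
    A.PosSemidef ∧ (1 - A * Ap) *ᵥ b = 0 := by
  obtain ⟨x₀, hx₀⟩ := hmin
  have hb : b = -(A *ᵥ x₀) :=
    eq_neg_of_add_eq_zero_right (mulVec_add_eq_zero_of_forall_quadratic_le hA hx₀)
  refine ⟨posSemidef_of_forall_quadratic_le hA hx₀, ?_⟩
  rw [hb, mulVec_neg, mulVec_mulVec, hMP.one_sub_mul_mul_eq_zero, zero_mulVec, neg_zero]
end

section
/- The two connected components of O(d) (matrices of determinant +1 and determinant −1) are separated by Frobenius distance at least √2: for any Q ∈ O(d) with det Q = 1 and P ∈ O(d) with det P = −1, ‖Q − P‖_F ≥ √2. -/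
open Matrix

/-- The two connected components of `O(d)` are separated by Frobenius distance at least `√2`:
for `Q ∈ O(d)` with `det Q = 1` and `P ∈ O(d)` with `det P = −1`, `‖Q − P‖_F ≥ √2`. -/
theorem orthogonal_components_separated {d : ℕ} (Q P : Matrix (Fin d) (Fin d) ℝ)
    (hQ : Qᵀ * Q = 1) (hP : Pᵀ * P = 1) (hdQ : Q.det = 1) (hdP : P.det = -1) :
    Real.sqrt 2 ≤ Real.sqrt (∑ i, ∑ j, (Q i j - P i j) ^ 2) := by
  -- det (Q + P) = 0
  have hdet : (Q + P).det = 0 := by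
    have h1 : (Q + P) = Q * (1 + Qᵀ * P) := by
      have hQQ : Q * Qᵀ = 1 := mul_eq_one_comm.mp hQ
      rw [mul_add, mul_one, ← mul_assoc, hQQ, one_mul]
    have h2 : (Q + P) = P * (1 + Pᵀ * Q) := by
      have hPP : P * Pᵀ = 1 := mul_eq_one_comm.mp hP
      rw [mul_add, mul_one, ← mul_assoc, hPP, one_mul, add_comm]
    have h3 : (1 + Pᵀ * Q).det = (1 + Qᵀ * P).det := by
      rw [← Matrix.det_transpose (1 + Pᵀ * Q)]
      congr 1
      simp [Matrix.transpose_add, Matrix.transpose_mul]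
    have e1 : (Q + P).det = (1 + Qᵀ * P).det := by
      rw [h1, Matrix.det_mul, hdQ, one_mul]
    have e2 : (Q + P).det = -(1 + Qᵀ * P).det := by
      rw [h2, Matrix.det_mul, hdP, h3]; ring
    linarith [e1, e2]
  obtain ⟨v, hv, hvz⟩ := (Matrix.exists_mulVec_eq_zero_iff).2 hdet
  -- P *ᵥ v = -(Q *ᵥ v)
  have hPv : P.mulVec v = -(Q.mulVec v) := by
    rw [Matrix.add_mulVec] at hvz
    funext i
    have := congrFun hvz i
    simp only [Pi.add_apply, Pi.neg_apply, Pi.zero_apply] at this ⊢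
    linarith
  -- norms
  set a : ℝ := ∑ j, v j ^ 2 with ha
  have hapos : 0 < a := by
    obtain ⟨j, hj⟩ := Function.ne_iff.mp hv
    exact Finset.sum_pos' (fun i _ => sq_nonneg _)
      ⟨j, Finset.mem_univ j,
        lt_of_le_of_ne (sq_nonneg _) (Ne.symm (pow_ne_zero 2 hj))⟩
  -- ‖Q v‖² = a
  have hQv : ∑ i, (Q.mulVec v i) ^ 2 = a := by
    have : ∑ i, (Q.mulVec v i) ^ 2 = Q.mulVec v ⬝ᵥ Q.mulVec v := by
      simp [dotProduct, sq]
    rw [this]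
    calc Q.mulVec v ⬝ᵥ Q.mulVec v
        = v ⬝ᵥ (Qᵀ * Q).mulVec v := by
          conv_rhs => rw [← Matrix.mulVec_mulVec, Matrix.dotProduct_mulVec,
            Matrix.vecMul_transpose]
      _ = v ⬝ᵥ v := by rw [hQ, Matrix.one_mulVec]
      _ = a := by simp [ha, dotProduct, sq]
  -- (Q - P) v = 2 Q v, so ∑ ((Q-P)v i)² = 4 a
  have hsub : ∀ i, (Q - P).mulVec v i = 2 * Q.mulVec v i := by
    intro i
    rw [Matrix.sub_mulVec]
    simp [hPv]; ring
  have hkey : ∑ i, ((Q - P).mulVec v i) ^ 2 = 4 * a := by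
    simp_rw [hsub, mul_pow]
    rw [← Finset.mul_sum, hQv]; norm_num
  -- Cauchy-Schwarz: 4a ≤ S * a
  set S : ℝ := ∑ i, ∑ j, (Q i j - P i j) ^ 2 with hS
  have hCS : 4 * a ≤ S * a := by
    rw [← hkey, hS, Finset.sum_mul]
    apply Finset.sum_le_sum
    intro i _
    have := Finset.sum_mul_sq_le_sq_mul_sq Finset.univ
      (fun j => Q i j - P i j) v
    simpa [Matrix.mulVec, dotProduct, Matrix.sub_apply] using this
  have hS4 : (4 : ℝ) ≤ S := le_of_mul_le_mul_right hCS hapos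
  calc Real.sqrt 2 ≤ Real.sqrt S := Real.sqrt_le_sqrt (by linarith)
    _ = _ := rfl
end
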